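/- arXiv:1110.6728 — 3 statements merged into one kernel-verified Lean document; each statement's English description precedes it below -/
import Mathlib

section
/- Let ℓ ≥ 1 be an integer, S > 0 a real number, and let a : ℤ → ℝ be an (ℓ, S)-ladder ordering, i.e. a(j+1) < a(j) for all j ∈ ℤ and a(j+ℓ) = a(j) − S for all j ∈ ℤ. Then for all integers j ≤ j', one has |(j' − j) − ℓ·(a(j) − a(j'))/S| ≤ ℓ. -/
/-!
Put `g j = j + ℓ·a(j)/S`. The ladder relation `a(j+ℓ) = a(j) − S` makes `g` periodic with
period `ℓ`, and the quantity to bound is `g j' − g j`. By periodicity it suffices to take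
`j' = j + r` with `0 ≤ r < ℓ`; then `g (j + r) − g j = r − ℓ·(a j − a (j+r))/S`, where
`0 ≤ a j − a (j+r) ≤ S` by monotonicity, so both terms lie in `[0, ℓ]`.
-/

theorem abs_sub_le_of_periodic {g : ℤ → ℝ} {ℓ : ℤ} {C : ℝ} (hg : Function.Periodic g ℓ)
    (hℓ : 0 < ℓ) (hC : ∀ j r, 0 ≤ r → r < ℓ → |g (j + r) - g j| ≤ C) (j j' : ℤ) :
    |g j' - g j| ≤ C := by
  have hj' : j' = j + (j' - j) % ℓ + (j' - j) / ℓ * ℓ := by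
    linarith [Int.emod_add_mul_ediv (j' - j) ℓ]
  have hshift := hg.int_mul ((j' - j) / ℓ) (j + (j' - j) % ℓ)
  rw [Int.cast_id] at hshift
  rw [hj', hshift]
  exact hC j _ (Int.emod_nonneg _ hℓ.ne') (Int.emod_lt_of_pos _ hℓ)

section Ladder

variable {a : ℤ → ℝ} {ℓ : ℤ} {S : ℝ}

theorem periodic_add_mul_div_of_ladder (hS : S ≠ 0) (hper : ∀ j, a (j + ℓ) = a j - S) :
    Function.Periodic (fun j : ℤ => (j : ℝ) + ℓ * a j / S) ℓ := by
  intro j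
  simp only [hper, Int.cast_add]
  field_simp
  ring

theorem sub_apply_add_le_of_ladder (ha : Antitone a) (hper : ∀ j, a (j + ℓ) = a j - S)
    {r : ℤ} (hr : r ≤ ℓ) (j : ℤ) : a j - a (j + r) ≤ S := by
  have : a (j + ℓ) ≤ a (j + r) := ha (by omega)
  linarith [hper j]

theorem abs_sub_mul_div_le_of_ladder (hS : 0 < S) (ha : Antitone a)
    (hper : ∀ j, a (j + ℓ) = a j - S) {r : ℤ} (hr₀ : 0 ≤ r) (hrℓ : r ≤ ℓ) (j : ℤ) :
    |(r : ℝ) - ℓ * (a j - a (j + r)) / S| ≤ ℓ := by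
  have hℓ : (0 : ℝ) ≤ ℓ := by exact_mod_cast hr₀.trans hrℓ
  have hdrop : 0 ≤ a j - a (j + r) := sub_nonneg.2 (ha (by omega))
  refine abs_sub_le_of_nonneg_of_le (by exact_mod_cast hr₀) (by exact_mod_cast hrℓ)
    (by positivity) ?_
  rw [div_le_iff₀ hS]
  exact mul_le_mul_of_nonneg_left (sub_apply_add_le_of_ladder ha hper hrℓ j) hℓ

theorem abs_sub_sub_mul_div_le_of_ladder (hℓ : 0 < ℓ) (hS : 0 < S) (ha : Antitone a)
    (hper : ∀ j, a (j + ℓ) = a j - S) (j j' : ℤ) :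
    |((j' - j : ℤ) : ℝ) - ℓ * (a j - a j') / S| ≤ ℓ := by
  have hdiff : ∀ i i' : ℤ, ((i' - i : ℤ) : ℝ) - ℓ * (a i - a i') / S =
      ((i' : ℝ) + ℓ * a i' / S) - ((i : ℝ) + ℓ * a i / S) := by
    intros; push_cast; ring
  rw [hdiff]
  refine abs_sub_le_of_periodic (periodic_add_mul_div_of_ladder hS.ne' hper) hℓ
    (fun i r hr₀ hrℓ => ?_) j j'
  rw [← hdiff, add_sub_cancel_left]
  exact abs_sub_mul_div_le_of_ladder hS ha hper hr₀ hrℓ.le i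

end Ladder

/-- Counting lemma for ladder orderings: if `a : ℤ → ℝ` is strictly decreasing and
satisfies `a (j + ℓ) = a j - S` for all `j` (an `(ℓ, S)`-ladder ordering), then for
all `j ≤ j'` the difference `j' - j` agrees with `ℓ·(a j - a j')/S` up to `ℓ`. -/
theorem stmt_4 (ℓ : ℤ) (hℓ : 1 ≤ ℓ) (S : ℝ) (hS : 0 < S) (a : ℤ → ℝ)
    (hdec : ∀ j : ℤ, a (j + 1) < a j)
    (hper : ∀ j : ℤ, a (j + ℓ) = a j - S) :
    ∀ j j' : ℤ, j ≤ j' →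
      |((j' - j : ℤ) : ℝ) - (ℓ : ℝ) * (a j - a j') / S| ≤ (ℓ : ℝ) := fun j j' _ =>
  abs_sub_sub_mul_div_le_of_ladder (by omega) hS
    (antitone_int_of_succ_le fun j => (hdec j).le) hper j j'
end

section
/- Let ℓ ≥ 1 be an integer and S > 0, T > 0 real numbers. Let a : ℤ → ℝ be an (ℓ, S)-ladder ordering and b : ℤ → ℝ an (ℓ, T)-ladder ordering, i.e. both are strictly decreasing and satisfy a(j+ℓ) = a(j) − S and b(j+ℓ) = b(j) − T for all j ∈ ℤ. Then for all integers j, j': |(a(j) − a(j'))/S − (b(j) − b(j'))/T| ≤ 2. -/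
/-!
Writing `j' = j + q ℓ + r` with `0 ≤ r < ℓ`, monotonicity squeezes `a j'` between
`a (j + q ℓ) = a j - q S` and `a (j + (q + 1) ℓ) = a j - (q + 1) S`, so
`⌊(a j - a j') / S⌋ = q`. The integer `q = (j' - j) / ℓ` does not depend on the period `S`,
so the two normalized differences have the same floor and differ by less than `1`.
-/

section Ladder

variable {ℓ : ℤ} {S : ℝ} {a : ℤ → ℝ}

lemma ladder_add_mul (hper : ∀ j, a (j + ℓ) = a j - S) (j k : ℤ) :
    a (j + k * ℓ) = a j - k * S := by
  induction k using Int.induction_on with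
  | zero => simp
  | succ n ih =>
    rw [show j + (n + 1 : ℤ) * ℓ = j + n * ℓ + ℓ by ring, hper, ih]
    push_cast
    ring
  | pred n ih =>
    have h := hper (j + (-n - 1) * ℓ)
    rw [show j + (-n - 1 : ℤ) * ℓ + ℓ = j + -n * ℓ by ring, ih] at h
    push_cast at h ⊢
    linarith

lemma floor_ladder_sub_div (hℓ : 0 < ℓ) (hS : 0 < S) (hdec : ∀ j, a (j + 1) < a j)
    (hper : ∀ j, a (j + ℓ) = a j - S) (j j' : ℤ) :
    ⌊(a j - a j') / S⌋ = (j' - j) / ℓ := by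
  set q := (j' - j) / ℓ
  have hdiv : ℓ * q + (j' - j) % ℓ = j' - j := Int.mul_ediv_add_emod _ _
  have hrem_nonneg : 0 ≤ (j' - j) % ℓ := Int.emod_nonneg _ hℓ.ne'
  have hrem_lt : (j' - j) % ℓ < ℓ := Int.emod_lt_of_pos _ hℓ
  have anti : StrictAnti a := strictAnti_int_of_succ_lt hdec
  have upper : a j' ≤ a j - q * S := by
    rw [← ladder_add_mul hper]
    exact anti.antitone (by nlinarith)
  have lower : a j - (q + 1 : ℤ) * S < a j' := by
    rw [← ladder_add_mul hper]
    exact anti (by nlinarith)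
  push_cast at lower
  rw [Int.floor_eq_iff, le_div_iff₀ hS, div_lt_iff₀ hS]
  constructor <;> linarith

end Ladder

/-- If `a` is an `(ℓ, S)`-ladder ordering and `b` is an `(ℓ, T)`-ladder ordering
(both strictly decreasing, with `a (j+ℓ) = a j - S` and `b (j+ℓ) = b j - T`), then
for all integers `j, j'` the normalized differences agree up to `2`. -/
theorem stmt_6 (ℓ : ℤ) (hℓ : 1 ≤ ℓ) (S T : ℝ) (hS : 0 < S) (hT : 0 < T)
    (a b : ℤ → ℝ)
    (hadec : ∀ j : ℤ, a (j + 1) < a j)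
    (haper : ∀ j : ℤ, a (j + ℓ) = a j - S)
    (hbdec : ∀ j : ℤ, b (j + 1) < b j)
    (hbper : ∀ j : ℤ, b (j + ℓ) = b j - T) :
    ∀ j j' : ℤ, |(a j - a j') / S - (b j - b j') / T| ≤ 2 := by
  intro j j'
  have hℓ_pos : 0 < ℓ := hℓ
  have same_floor : ⌊(a j - a j') / S⌋ = ⌊(b j - b j') / T⌋ := by
    rw [floor_ladder_sub_div hℓ_pos hS hadec haper, floor_ladder_sub_div hℓ_pos hT hbdec hbper]
  linarith [Int.abs_sub_lt_one_of_floor_eq_floor same_floor]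
end

section
/- Let ℓ ≥ 1 be an integer, S > 0 and T > 0 real numbers, x_A, y_A, x_D, y_D real numbers, and C ≥ 0. Suppose (k_i)_{i∈ℕ} is an unbounded sequence of positive integers and that for each i there exist functions a_i, b_i : ℤ → ℝ, each strictly decreasing and satisfying a_i(j+ℓ) = a_i(j) − S and b_i(j+ℓ) = b_i(j) − T for all j ∈ ℤ, together with integers j_i, j'_i such that |a_i(j_i) − k_i·x_A| ≤ C, |a_i(j'_i) − k_i·y_A| ≤ C, |b_i(j_i) − k_i·x_D| ≤ C, and |b_i(j'_i) − k_i·y_D| ≤ C. Then (x_A − y_A)/S = (x_D − y_D)/T. -/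
/-!
Comparing two positions `j, j'` of an `(ℓ, S)`-ladder determines `a j - a j'` up to an error
of at most `S` from the integer `q = ⌊(j' - j) / ℓ⌋` alone: it lies in `[q S, (q + 1) S)`.
Since the ladders `a_i` and `b_i` share the positions `j_i, j'_i`, both `k_i (x_A - y_A) / S` and
`k_i (x_D - y_D) / T` lie within a bounded distance of the same integer `q_i`. Hence
`k_i ((x_A - y_A) / S - (x_D - y_D) / T)` stays bounded while `k_i` is unbounded, which forces the
difference to vanish.
-/

def IsLadder {α : Type*} [AddCommGroup α] [Preorder α] (ℓ : ℤ) (S : α) (a : ℤ → α) : Prop :=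
  StrictAnti a ∧ ∀ m, a (m + ℓ) = a m - S

namespace IsLadder

section Preorder

variable {α : Type*} [AddCommGroup α] [Preorder α] {ℓ : ℤ} {S : α} {a : ℤ → α}

theorem of_succ_lt (hdec : ∀ m, a (m + 1) < a m) (hper : ∀ m, a (m + ℓ) = a m - S) :
    IsLadder ℓ S a :=
  ⟨strictAnti_int_of_succ_lt hdec, hper⟩

theorem add_mul_period (ha : IsLadder ℓ S a) (m q : ℤ) : a (m + q * ℓ) = a m - q • S := by
  have hφ : Function.Periodic (fun p : ℤ => a (m + p * ℓ) + p • S) 1 := fun p => by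
    simp only [add_one_mul, ← add_assoc, ha.2, add_zsmul, one_zsmul]
    abel
  exact eq_sub_of_add_eq (by simpa using hφ.zsmul q 0)

end Preorder

variable {α : Type*} [AddCommGroup α] [PartialOrder α] [IsOrderedAddMonoid α]
  {ℓ : ℤ} {S : α} {a : ℤ → α}

theorem sub_sub_ediv_zsmul_mem_Ico (ha : IsLadder ℓ S a) (hℓ : 0 < ℓ) (j j' : ℤ) :
    a j - a j' - ((j' - j) / ℓ) • S ∈ Set.Ico 0 S := by
  set q := (j' - j) / ℓ
  set r := (j' - j) % ℓ
  have hr₀ : 0 ≤ r := Int.emod_nonneg _ hℓ.ne'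
  have hrℓ : r < ℓ := Int.emod_lt_of_pos _ hℓ
  have hj' : j' = j + r + q * ℓ := by linarith [Int.emod_add_mul_ediv (j' - j) ℓ]
  have hupper : a j - S < a (j + r) := ha.2 j ▸ ha.1 (by omega)
  have hlower : a (j + r) ≤ a j := ha.1.antitone (by omega)
  rw [hj', ha.add_mul_period, sub_sub, sub_add_cancel]
  exact ⟨sub_nonneg.mpr hlower, sub_lt_comm.mpr hupper⟩

end IsLadder

theorem IsLadder.abs_div_sub_ediv_le {ℓ : ℤ} {S C u v : ℝ} {a : ℤ → ℝ} (ha : IsLadder ℓ S a)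
    (hℓ : 0 < ℓ) (hS : 0 < S) {j j' : ℤ} (hu : |a j - u| ≤ C) (hv : |a j' - v| ≤ C) :
    |(u - v) / S - ((j' - j) / ℓ : ℤ)| ≤ (2 * C + S) / S := by
  obtain ⟨hlower, hupper⟩ := ha.sub_sub_ediv_zsmul_mem_Ico hℓ j j'
  rw [zsmul_eq_mul] at hlower hupper
  rw [abs_le] at hu hv
  rw [div_sub' hS.ne', abs_div, abs_of_pos hS, div_le_div_iff_of_pos_right hS, abs_le]
  constructor <;> linarith

theorem eq_zero_of_forall_abs_natCast_mul_le {ι : Type*} {k : ι → ℕ} {x M : ℝ}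
    (hk : ∀ n : ℕ, ∃ i, n < k i) (hbound : ∀ i, |(k i : ℝ) * x| ≤ M) : x = 0 := by
  by_contra hx
  obtain ⟨i, hi⟩ := hk ⌈M / |x|⌉₊
  have hMi : M / |x| < k i := Nat.lt_of_ceil_lt hi
  rw [div_lt_iff₀ (abs_pos.mpr hx)] at hMi
  have := hbound i
  rw [abs_mul, Nat.abs_cast] at this
  linarith

theorem stmt_8_general (ℓ : ℤ) (hℓ : 1 ≤ ℓ) (S T : ℝ) (hS : 0 < S) (hT : 0 < T)
    (xA yA xD yD C : ℝ)
    (k : ℕ → ℕ) (hkunb : ∀ n : ℕ, ∃ i, n < k i)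
    (h : ∀ i : ℕ, ∃ (a b : ℤ → ℝ) (j j' : ℤ),
      (∀ m : ℤ, a (m + 1) < a m) ∧ (∀ m : ℤ, a (m + ℓ) = a m - S) ∧
      (∀ m : ℤ, b (m + 1) < b m) ∧ (∀ m : ℤ, b (m + ℓ) = b m - T) ∧
      |a j - (k i : ℝ) * xA| ≤ C ∧ |a j' - (k i : ℝ) * yA| ≤ C ∧
      |b j - (k i : ℝ) * xD| ≤ C ∧ |b j' - (k i : ℝ) * yD| ≤ C) :
    (xA - yA) / S = (xD - yD) / T := by
  have hℓ₀ : 0 < ℓ := hℓ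
  have hbound : ∀ i, |(k i : ℝ) * ((xA - yA) / S - (xD - yD) / T)| ≤
      (2 * C + S) / S + (2 * C + T) / T := fun i => by
    obtain ⟨a, b, j, j', ha_dec, ha_per, hb_dec, hb_per, hxA, hyA, hxD, hyD⟩ := h i
    have hA := (IsLadder.of_succ_lt ha_dec ha_per).abs_div_sub_ediv_le hℓ₀ hS hxA hyA
    have hB := (IsLadder.of_succ_lt hb_dec hb_per).abs_div_sub_ediv_le hℓ₀ hT hxD hyD
    set q : ℝ := (((j' - j) / ℓ : ℤ) : ℝ)
    calc |(k i : ℝ) * ((xA - yA) / S - (xD - yD) / T)|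
        = |((k i * xA - k i * yA) / S - q) - ((k i * xD - k i * yD) / T - q)| := by
          congr 1; ring
      _ ≤ (2 * C + S) / S + (2 * C + T) / T := (abs_sub _ _).trans (add_le_add hA hB)
  exact sub_eq_zero.mp (eq_zero_of_forall_abs_natCast_mul_le hkunb hbound)

/-- Core abstraction of the action–index relations: if along an unbounded sequence
`k i` of positive integers there are `(ℓ, S)`-ladder orderings `a_i` and
`(ℓ, T)`-ladder orderings `b_i` together with positions `j_i, j'_i` at which `a_i`
approximates `k_i·x_A`, `k_i·y_A` and `b_i` approximates `k_i·x_D`, `k_i·y_D` up to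
a uniform constant `C`, then `(x_A - y_A)/S = (x_D - y_D)/T`. -/
theorem stmt_8 (ℓ : ℤ) (hℓ : 1 ≤ ℓ) (S T : ℝ) (hS : 0 < S) (hT : 0 < T)
    (xA yA xD yD C : ℝ) (hC : 0 ≤ C)
    (k : ℕ → ℕ) (hkpos : ∀ i, 0 < k i) (hkunb : ∀ n : ℕ, ∃ i, n < k i)
    (h : ∀ i : ℕ, ∃ (a b : ℤ → ℝ) (j j' : ℤ),
      (∀ m : ℤ, a (m + 1) < a m) ∧ (∀ m : ℤ, a (m + ℓ) = a m - S) ∧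
      (∀ m : ℤ, b (m + 1) < b m) ∧ (∀ m : ℤ, b (m + ℓ) = b m - T) ∧
      |a j - (k i : ℝ) * xA| ≤ C ∧ |a j' - (k i : ℝ) * yA| ≤ C ∧
      |b j - (k i : ℝ) * xD| ≤ C ∧ |b j' - (k i : ℝ) * yD| ≤ C) :
    (xA - yA) / S = (xD - yD) / T :=
  stmt_8_general ℓ hℓ S T hS hT xA yA xD yD C k hkunb h
end
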